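/- arXiv:2405.18301 — 5 statements merged into one kernel-verified Lean document; each statement's English description precedes it below -/
import Mathlib

section
/- For every bounded, open, connected, simply connected set Ω ⊂ ℂ whose frontier ∂Ω is the image of an injective continuous map of the unit circle, the medial axis MA(Ω) is nonempty; that is, there exists z ∈ Ω and two distinct points w, w' ∈ ∂Ω with |z − w| = |z − w'| = dist(z, ∂Ω). -/
open Set Metric MeasureTheory Filter
open scoped ENNReal NNReal Topology

noncomputable section

/-- The medial axis of an open set `Ω ⊂ ℂ`: the set of points of `Ω` having at least two
distinct closest points on the frontier. -/
def medialAxis (Ω : Set ℂ) : Set ℂ :=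
  {z | z ∈ Ω ∧ ∃ w ∈ frontier Ω, ∃ w' ∈ frontier Ω, w ≠ w' ∧
    dist z w = Metric.infDist z (frontier Ω) ∧
    dist z w' = Metric.infDist z (frontier Ω)}

/-- The frontier of `Q` is a finite union of nontrivial line segments. -/
def IsPolygonalBoundary (Q : Set ℂ) : Prop :=
  ∃ (n : ℕ) (p q : Fin n → ℂ), (∀ i, p i ≠ q i) ∧
    frontier Q = ⋃ i, segment ℝ (p i) (q i)

/-!
Let `z` maximise the distance to `∂Ω` over the compact set `closure Ω`; it lies in `Ω`, since
that distance vanishes on `∂Ω` and is positive on `Ω`. If `z` had a unique nearest point `w`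
on `∂Ω`, moving `z` slightly away from `w` would increase its distance to `∂Ω`, contradicting
maximality.
-/

open scoped RealInnerProductSpace

section InnerProductSpace

variable {E : Type*} [NormedAddCommGroup E] [InnerProductSpace ℝ E]

theorem dist_lt_dist_add_smul_of_inner_pos {x v u : E} (hinner : 0 < ⟪x - v, u⟫) {t : ℝ}
    (ht : 0 < t) : dist x v < dist (x + t • u) v := by
  have hsq : ‖x - v‖ ^ 2 < ‖x + t • u - v‖ ^ 2 := by
    rw [show x + t • u - v = (x - v) + t • u by abel, norm_add_sq_real, real_inner_smul_right]
    nlinarith [sq_nonneg ‖t • u‖]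
  rw [dist_eq_norm, dist_eq_norm]
  exact lt_of_pow_lt_pow_left₀ 2 (norm_nonneg _) hsq

theorem inner_sub_sub_pos_of_dist_lt {x v w : E} (h : dist v w < dist x w) :
    0 < ⟪x - v, x - w⟫ := by
  have hcs : ⟪v - w, x - w⟫ ≤ ‖v - w‖ * ‖x - w‖ := real_inner_le_norm _ _
  rw [dist_eq_norm, dist_eq_norm] at h
  calc 0 < ‖x - w‖ * ‖x - w‖ - ‖v - w‖ * ‖x - w‖ := by
        nlinarith [norm_nonneg (v - w)]
    _ ≤ ⟪x - w, x - w⟫ - ⟪v - w, x - w⟫ := by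
        rw [real_inner_self_eq_norm_mul_norm]; linarith
    _ = ⟪x - v, x - w⟫ := by
        rw [← inner_sub_left]; congr 1; abel

/- Pushing `z` away from `w` increases its distance to the points of `F` near `w` by the
inner-product expansion of the squared distance, and keeps it above `d` on the rest of `F`
because, by compactness, the distance from `z` to that rest exceeds `d` by a positive margin. -/
theorem not_isLocalMax_infDist_of_unique_nearest {F : Set E} (hF : IsCompact F) {z w : E}
    (hw : w ∈ F) (hzw : dist z w = infDist z F) (hpos : 0 < infDist z F)
    (huniq : ∀ v ∈ F, dist z v = infDist z F → v = w) :
    ¬ IsLocalMax (fun x ↦ infDist x F) z := by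
  set d := infDist z F
  set K := F \ ball w d
  have hK : ∀ v ∈ K, d < dist z v := fun v hv ↦
    (infDist_le_dist_of_mem hv.1).lt_of_ne fun h ↦ hv.2 (huniq v hv.1 h.symm ▸ mem_ball_self hpos)
  obtain ⟨m, hdm, hm⟩ := (hF.diff isOpen_ball).exists_forall_le'
    (continuous_const.dist continuous_id').continuousOn hK
  intro hmax
  obtain ⟨ε, hε, hle⟩ := Metric.eventually_nhds_iff.1 hmax
  set s := min (ε / 2) ((m - d) / 2)
  have hs : 0 < s := lt_min (half_pos hε) (half_pos (sub_pos.2 hdm))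
  set z' := z + (s / d) • (z - w)
  have hzz' : dist z z' = s := by
    rw [dist_comm, dist_eq_norm, add_sub_cancel_left, norm_smul, ← dist_eq_norm, hzw,
      Real.norm_of_nonneg (div_pos hs hpos).le, div_mul_cancel₀ _ hpos.ne']
  obtain ⟨v, hv, hz'v⟩ := hF.exists_infDist_eq_dist ⟨w, hw⟩ z'
  have hfar : d < dist z' v := by
    by_cases hvw : v ∈ ball w d
    · calc d ≤ dist z v := infDist_le_dist_of_mem hv
        _ < dist z' v := dist_lt_dist_add_smul_of_inner_pos
            (inner_sub_sub_pos_of_dist_lt (hzw ▸ hvw)) (div_pos hs hpos)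
    · have htri := dist_triangle z z' v
      linarith [hm v ⟨hv, hvw⟩, min_le_right (ε / 2) ((m - d) / 2)]
  have : dist z' z < ε := by
    rw [dist_comm, hzz']; linarith [min_le_left (ε / 2) ((m - d) / 2)]
  linarith [hle this]

theorem exists_two_nearest_frontier_points_of_isBounded [ProperSpace E] [Nontrivial E]
    {Ω : Set E} (hopen : IsOpen Ω) (hbdd : Bornology.IsBounded Ω) (hne : Ω.Nonempty) :
    ∃ z ∈ Ω, ∃ w ∈ frontier Ω, ∃ w' ∈ frontier Ω, w ≠ w' ∧
      dist z w = infDist z (frontier Ω) ∧ dist z w' = infDist z (frontier Ω) := by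
  set F := frontier Ω
  have hFne : F.Nonempty :=
    nonempty_frontier_iff.2 ⟨hne, fun h ↦ NormedSpace.unbounded_univ ℝ E (h ▸ hbdd)⟩
  have hF : IsCompact F :=
    hbdd.isCompact_closure.of_isClosed_subset isClosed_frontier frontier_subset_closure
  obtain ⟨z, hzcl, hzmax⟩ := hbdd.isCompact_closure.exists_isMaxOn hne.closure
    (continuous_infDist_pt F).continuousOn
  obtain ⟨x, hx⟩ := hne
  have hpos : 0 < infDist z F := by
    have hxF : x ∉ F := fun h ↦ (hopen.inter_frontier_eq.subset ⟨hx, h⟩).elim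
    exact ((isClosed_frontier.notMem_iff_infDist_pos hFne).1 hxF).trans_le
      (hzmax (subset_closure hx))
  have hzΩ : z ∈ Ω := by
    rw [← hopen.interior_eq, ← closure_sdiff_frontier]
    exact ⟨hzcl, fun h ↦ hpos.ne' (infDist_zero_of_mem h)⟩
  have hloc : IsLocalMax (fun y ↦ infDist y F) z :=
    hzmax.isLocalMax (mem_of_superset (hopen.mem_nhds hzΩ) subset_closure)
  obtain ⟨w, hw, hzw⟩ := hF.exists_infDist_eq_dist hFne z
  obtain ⟨w', hw', hzw', hw'w⟩ : ∃ w' ∈ F, dist z w' = infDist z F ∧ w' ≠ w := by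
    by_contra! huniq
    exact not_isLocalMax_infDist_of_unique_nearest hF hw hzw.symm hpos huniq hloc
  exact ⟨z, hzΩ, w, hw, w', hw', hw'w.symm, hzw.symm, hzw'⟩

end InnerProductSpace

theorem medialAxis_nonempty_general (Ω : Set ℂ) (hopen : IsOpen Ω)
    (hbounded : Bornology.IsBounded Ω) (hconn : IsConnected Ω) :
    ∃ z ∈ Ω, ∃ w ∈ frontier Ω, ∃ w' ∈ frontier Ω, w ≠ w' ∧
      dist z w = Metric.infDist z (frontier Ω) ∧
      dist z w' = Metric.infDist z (frontier Ω) :=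
  exists_two_nearest_frontier_points_of_isBounded hopen hbounded hconn.nonempty

/-- The medial axis of a bounded Jordan domain in `ℂ` is nonempty. -/
theorem medialAxis_nonempty (Ω : Set ℂ) (hopen : IsOpen Ω)
    (hbounded : Bornology.IsBounded Ω) (hconn : IsConnected Ω)
    (hsimply : SimplyConnectedSpace Ω)
    (γ : ℝ → ℂ) (hγc : Continuous γ) (hγp : Function.Periodic γ 1)
    (hγi : Set.InjOn γ (Set.Ico 0 1)) (hγim : γ '' Set.Ico 0 1 = frontier Ω) :
    ∃ z ∈ Ω, ∃ w ∈ frontier Ω, ∃ w' ∈ frontier Ω, w ≠ w' ∧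
      dist z w = Metric.infDist z (frontier Ω) ∧
      dist z w' = Metric.infDist z (frontier Ω) :=
  medialAxis_nonempty_general Ω hopen hbounded hconn
end
end

section
/- Let Q be a Jordan quadrilateral and let (Qₙ) be an increasing sequence of Jordan quadrilaterals (Qₙ ⊆ Qₙ₊₁) converging to Q from inside. If for every n there exist cₙ ∈ Qₙ and rₙ > 0 such that the open disk D(cₙ,rₙ) is contained in Qₙ and the circle {z : |z − cₙ| = rₙ} ∩ ∂Qₙ contains points of three distinct sides of Qₙ, then there exist c ∈ Q and r > 0 such that the open disk D(c,r) is contained in Q and the circle {z : |z − c| = r} ∩ ∂Q contains points of three distinct sides of Q. -/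
open Set Metric MeasureTheory Filter
open scoped ENNReal NNReal Topology

noncomputable section

/-- A Jordan quadrilateral: a bounded, open, connected, simply connected subset `Q` of `ℂ`
whose frontier is a Jordan curve (the image of an injective continuous map of the unit circle,
here parametrized by a continuous `1`-periodic map `γ : ℝ → ℂ` injective on `[0,1)`),
together with four marked points `γ t₁, γ t₂, γ t₃, γ t₄` on the frontier in cyclic order. -/
structure JordanQuadrilateral where
  Q : Set ℂ
  isOpen : IsOpen Q
  isBounded : Bornology.IsBounded Q
  isConnected : IsConnected Q
  simplyConnected : SimplyConnectedSpace Q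
  γ : ℝ → ℂ
  γ_continuous : Continuous γ
  γ_periodic : Function.Periodic γ 1
  γ_injOn : Set.InjOn γ (Set.Ico 0 1)
  γ_image : γ '' Set.Ico 0 1 = frontier Q
  t₁ : ℝ
  t₂ : ℝ
  t₃ : ℝ
  t₄ : ℝ
  ht₁ : 0 ≤ t₁
  h₁₂ : t₁ < t₂
  h₂₃ : t₂ < t₃
  h₃₄ : t₃ < t₄
  ht₄ : t₄ < 1

namespace JordanQuadrilateral

/-- The first quad-vertex `v₁`. -/
def v₁ (Q : JordanQuadrilateral) : ℂ := Q.γ Q.t₁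

/-- The second quad-vertex `v₂`. -/
def v₂ (Q : JordanQuadrilateral) : ℂ := Q.γ Q.t₂

/-- The third quad-vertex `v₃`. -/
def v₃ (Q : JordanQuadrilateral) : ℂ := Q.γ Q.t₃

/-- The fourth quad-vertex `v₄`. -/
def v₄ (Q : JordanQuadrilateral) : ℂ := Q.γ Q.t₄

/-- The side `a₁`, the boundary arc from `v₁` to `v₂`. -/
def a₁ (Q : JordanQuadrilateral) : Set ℂ := Q.γ '' Set.Icc Q.t₁ Q.t₂

/-- The side `b₁`, the boundary arc from `v₂` to `v₃`. -/
def b₁ (Q : JordanQuadrilateral) : Set ℂ := Q.γ '' Set.Icc Q.t₂ Q.t₃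

/-- The side `a₂`, the boundary arc from `v₃` to `v₄`. -/
def a₂ (Q : JordanQuadrilateral) : Set ℂ := Q.γ '' Set.Icc Q.t₃ Q.t₄

/-- The side `b₂`, the boundary arc from `v₄` to `v₁`. -/
def b₂ (Q : JordanQuadrilateral) : Set ℂ := Q.γ '' Set.Icc Q.t₄ (Q.t₁ + 1)

/-- The four sides of the quadrilateral, indexed cyclically: `a₁, b₁, a₂, b₂`. -/
def side (Q : JordanQuadrilateral) : Fin 4 → Set ℂ := ![Q.a₁, Q.b₁, Q.a₂, Q.b₂]

/-- The four quad-vertices, indexed cyclically. -/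
def vertex (Q : JordanQuadrilateral) : Fin 4 → ℂ := ![Q.v₁, Q.v₂, Q.v₃, Q.v₄]

/-- The internal distance `s_a(Q)` between the `a`-sides: the infimum of lengths of
rectifiable arcs in `closure Q` with interior in `Q` joining `a₁` to `a₂`. -/
def sa (Q : JordanQuadrilateral) : ℝ≥0∞ :=
  ⨅ (g : ℝ → ℂ) (_ : ContinuousOn g (Set.Icc 0 1))
    (_ : Set.MapsTo g (Set.Icc 0 1) (closure Q.Q))
    (_ : Set.MapsTo g (Set.Ioo 0 1) Q.Q)
    (_ : g 0 ∈ Q.a₁) (_ : g 1 ∈ Q.a₂), eVariationOn g (Set.Icc 0 1)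

/-- The internal distance `s_b(Q)` between the `b`-sides. -/
def sb (Q : JordanQuadrilateral) : ℝ≥0∞ :=
  ⨅ (g : ℝ → ℂ) (_ : ContinuousOn g (Set.Icc 0 1))
    (_ : Set.MapsTo g (Set.Icc 0 1) (closure Q.Q))
    (_ : Set.MapsTo g (Set.Ioo 0 1) Q.Q)
    (_ : g 0 ∈ Q.b₁) (_ : g 1 ∈ Q.b₂), eVariationOn g (Set.Icc 0 1)

/-- A rectifiable curve in `Q` joining side `a₁` to side `a₂` (a rectifiable curve can always
be reparametrized as a Lipschitz map on `[0,1]`). -/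
def IsJoiningCurve (Q : JordanQuadrilateral) (g : ℝ → ℂ) : Prop :=
  (∃ K : ℝ≥0, LipschitzOnWith K g (Set.Icc 0 1)) ∧
    Set.MapsTo g (Set.Ioo 0 1) Q.Q ∧ g 0 ∈ Q.a₁ ∧ g 1 ∈ Q.a₂

end JordanQuadrilateral

/-- The arclength integral `∫_g ρ |dz|` of a density `ρ` along a curve `g` defined on `[0,1]`. -/
def quadCurveIntegral (ρ : ℂ → ℝ≥0∞) (g : ℝ → ℂ) : ℝ≥0∞ :=
  ∫⁻ t in Set.Icc (0 : ℝ) 1, ρ (g t) * (‖deriv g t‖₊ : ℝ≥0∞)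

namespace JordanQuadrilateral

/-- A Borel density `ρ` is admissible for `Q` if `∫_g ρ |dz| ≥ 1` for every rectifiable
curve `g` in `Q` joining the `a`-sides. -/
def IsAdmissible (Q : JordanQuadrilateral) (ρ : ℂ → ℝ≥0∞) : Prop :=
  Measurable ρ ∧ ∀ g : ℝ → ℂ, Q.IsJoiningCurve g → 1 ≤ quadCurveIntegral ρ g

/-- The modulus `M(Q)` of the quadrilateral: the modulus of the family of rectifiable curves
in `Q` joining side `a₁` to side `a₂`. -/
def modulus (Q : JordanQuadrilateral) : ℝ≥0∞ :=
  ⨅ (ρ : ℂ → ℝ≥0∞) (_ : Q.IsAdmissible ρ), ∫⁻ z, ρ z ^ 2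

/-- The circle of center `c` and radius `r` meets (at least) three distinct sides of `Q`. -/
def TouchesThreeSides (Q : JordanQuadrilateral) (c : ℂ) (r : ℝ) : Prop :=
  ∃ i j k : Fin 4, i ≠ j ∧ i ≠ k ∧ j ≠ k ∧
    (Metric.sphere c r ∩ Q.side i).Nonempty ∧
    (Metric.sphere c r ∩ Q.side j).Nonempty ∧
    (Metric.sphere c r ∩ Q.side k).Nonempty

end JordanQuadrilateral

/-- A sequence of Jordan quadrilaterals converges to `Q` from inside: `closure (Qₙ) ⊆ closure Q`
and each side of `Qₙ` converges to the corresponding side of `Q` in the Hausdorff distance. -/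
def ConvergesFromInside (Qn : ℕ → JordanQuadrilateral) (Q : JordanQuadrilateral) : Prop :=
  (∀ n, closure (Qn n).Q ⊆ closure Q.Q) ∧
    ∀ ε > 0, ∃ N : ℕ, ∀ n ≥ N, ∀ i : Fin 4,
      Metric.hausdorffDist ((Qn n).side i) (Q.side i) < ε

/-- Near `v`, the frontier of `Q` consists of exactly two line segments emanating from `v`
making an angle of `π/2` radians (the directions `u` and `±I·u` are orthogonal). -/
def HasRightAngleCorner (Q : Set ℂ) (v : ℂ) : Prop :=
  ∃ (u w : ℂ) (ε : ℝ), 0 < ε ∧ ‖u‖ = 1 ∧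
    (w = Complex.I * u ∨ w = -(Complex.I * u)) ∧
    frontier Q ∩ Metric.ball v ε =
      (segment ℝ v (v + ε • u) ∪ segment ℝ v (v + ε • w)) ∩ Metric.ball v ε

/-!
Along an ultrafilter finer than `atTop`, the centres and radii of the disks converge, and the
indices of the three touched sides become constant. Hausdorff convergence of the sides puts the
limits of the touching points on the corresponding sides of `Q`, and on the limit circle. A point
of the limit disk lies, for late `n`, deep inside `Qₙ`, hence far from every side of `Qₙ`, so it
is not on the frontier of `Q`. The limit radius is positive because three distinct sides always
include two opposite ones, which are disjoint.
-/

theorem IsCompact.exists_tendsto_of_ultrafilter {X ι : Type*} [TopologicalSpace X] {s : Set X}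
    (hs : IsCompact s) {F : Ultrafilter ι} {f : ι → X} (hf : ∀ᶠ i in F, f i ∈ s) :
    ∃ x ∈ s, Tendsto f (F : Filter ι) (𝓝 x) :=
  hs.ultrafilter_le_nhds (F.map f) (le_principal_iff.2 hf)

theorem Ultrafilter.exists_eventually_eq_of_finite {α ι : Type*} [Finite α] (F : Ultrafilter ι)
    (f : ι → α) : ∃ a, ∀ᶠ i in F, f i = a := by
  obtain ⟨a, ha⟩ := (F.map f).eq_pure_of_finite
  exact ⟨a, show {b | b = a} ∈ F.map f from ha ▸ rfl⟩

namespace JordanQuadrilateral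

variable (P : JordanQuadrilateral)

theorem range_γ : range P.γ = frontier P.Q := by
  rw [← P.γ_image]
  refine (range_subset_iff.2 fun x => ?_).antisymm (image_subset_range _ _)
  obtain ⟨y, hy, hxy⟩ := P.γ_periodic.exists_mem_Ico₀ one_pos x
  exact ⟨y, hy, hxy.symm⟩

theorem side_subset_frontier (i : Fin 4) : P.side i ⊆ frontier P.Q := by
  rw [← P.range_γ]
  fin_cases i <;> exact image_subset_range _ _

theorem frontier_subset_iUnion_side : frontier P.Q ⊆ ⋃ i, P.side i := by
  rw [← P.range_γ]
  rintro _ ⟨x, rfl⟩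
  obtain ⟨t, ht, hxt⟩ := P.γ_periodic.exists_mem_Ico one_pos x P.t₁
  rw [hxt, mem_iUnion]
  rcases le_or_gt t P.t₂ with h₂ | h₂
  · exact ⟨0, t, ⟨ht.1, h₂⟩, rfl⟩
  rcases le_or_gt t P.t₃ with h₃ | h₃
  · exact ⟨1, t, ⟨h₂.le, h₃⟩, rfl⟩
  rcases le_or_gt t P.t₄ with h₄ | h₄
  · exact ⟨2, t, ⟨h₃.le, h₄⟩, rfl⟩
  · exact ⟨3, t, ⟨h₄.le, ht.2.le⟩, rfl⟩

theorem isCompact_side (i : Fin 4) : IsCompact (P.side i) := by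
  fin_cases i <;> exact isCompact_Icc.image P.γ_continuous

theorem side_nonempty (i : Fin 4) : (P.side i).Nonempty := by
  have := P.ht₁; have := P.h₁₂; have := P.h₂₃; have := P.h₃₄; have := P.ht₄
  fin_cases i <;> exact (nonempty_Icc.2 (by linarith)).image _

theorem hausdorffEDist_side_ne_top (P' : JordanQuadrilateral) (i : Fin 4) :
    hausdorffEDist (P.side i) (P'.side i) ≠ ⊤ :=
  hausdorffEDist_ne_top_of_nonempty_of_bounded (P.side_nonempty i) (P'.side_nonempty i)
    (P.isCompact_side i).isBounded (P'.isCompact_side i).isBounded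

theorem eq_or_eq_add_one_of_γ_eq {s t : ℝ} (hs : s ∈ Ico 0 1) (ht : t ∈ Ico 0 2)
    (h : P.γ s = P.γ t) : t = s ∨ t = s + 1 := by
  rcases lt_or_ge t 1 with ht₁ | ht₁
  · exact .inl (P.γ_injOn ⟨ht.1, ht₁⟩ hs h.symm)
  · have hγ : P.γ (t - 1) = P.γ t := by simpa using (P.γ_periodic (t - 1)).symm
    have := P.γ_injOn ⟨by linarith, by linarith [ht.2]⟩ hs (hγ.trans h.symm)
    exact .inr (by linarith)

theorem disjoint_side_add_two (i : Fin 4) : Disjoint (P.side i) (P.side (i + 2)) := by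
  have hopp : Disjoint P.a₁ P.a₂ ∧ Disjoint P.b₁ P.b₂ := by
    have := P.ht₁; have := P.h₁₂; have := P.h₂₃; have := P.h₃₄; have := P.ht₄
    constructor <;>
    · rw [Set.disjoint_left]
      rintro _ ⟨s, hs, rfl⟩ ⟨t, ht, hst⟩
      rcases P.eq_or_eq_add_one_of_γ_eq ⟨by linarith [hs.1], by linarith [hs.2]⟩
        ⟨by linarith [ht.1], by linarith [ht.2]⟩ hst.symm with h | h <;>
      linarith [hs.1, hs.2, ht.1, ht.2]
  fin_cases i
  exacts [hopp.1, hopp.2, hopp.1.symm, hopp.2.symm]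

theorem inter_three_sides_eq_empty {i j k : Fin 4} (hij : i ≠ j) (hik : i ≠ k) (hjk : j ≠ k) :
    P.side i ∩ P.side j ∩ P.side k = ∅ := by
  obtain ⟨a, ha, ha₂⟩ : ∃ a ∈ ({i, j, k} : Finset (Fin 4)), a + 2 ∈ ({i, j, k} : Finset (Fin 4)) :=
    by revert i j k; decide
  have hsub : ∀ b ∈ ({i, j, k} : Finset (Fin 4)), P.side i ∩ P.side j ∩ P.side k ⊆ P.side b := by
    simp only [Finset.mem_insert, Finset.mem_singleton]
    rintro b (rfl | rfl | rfl) p hp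
    exacts [hp.1.1, hp.1.2, hp.2]
  exact subset_eq_empty (subset_inter (hsub a ha) (hsub _ ha₂))
    (P.disjoint_side_add_two a).inter_eq

theorem TouchesThreeSides.radius_pos {P : JordanQuadrilateral} {c : ℂ} {r : ℝ}
    (h : P.TouchesThreeSides c r) : 0 < r := by
  obtain ⟨i, j, k, hij, hik, hjk, ⟨x, hx, hxi⟩, ⟨y, hy, hyj⟩, ⟨z, hz, hzk⟩⟩ := h
  rcases (dist_nonneg.trans_eq (mem_sphere.1 hx)).lt_or_eq with hr | rfl
  · exact hr
  · simp only [sphere_zero, mem_singleton_iff] at hx hy hz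
    subst hx hy hz
    have := (P.inter_three_sides_eq_empty hij hik hjk).subset ⟨⟨hxi, hyj⟩, hzk⟩
    exact absurd this (notMem_empty _)

theorem le_infDist_side_of_ball_subset {w : ℂ} {δ : ℝ} (h : ball w δ ⊆ P.Q) (i : Fin 4) :
    δ ≤ infDist w (P.side i) := by
  refine (le_infDist (P.side_nonempty i)).2 fun u hu => not_lt.1 fun hlt => ?_
  have hu' := P.side_subset_frontier i hu
  rw [P.isOpen.frontier_eq] at hu'
  exact hu'.2 (h (mem_ball'.2 hlt))

end JordanQuadrilateral

namespace ConvergesFromInside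

variable {Qn : ℕ → JordanQuadrilateral} {Q : JordanQuadrilateral}

theorem side_subset_closure (h : ConvergesFromInside Qn Q) (n : ℕ) (i : Fin 4) :
    (Qn n).side i ⊆ closure Q.Q :=
  ((Qn n).side_subset_frontier i).trans (frontier_subset_closure.trans (h.1 n))

theorem tendsto_hausdorffDist (h : ConvergesFromInside Qn Q) (i : Fin 4) :
    Tendsto (fun n => hausdorffDist ((Qn n).side i) (Q.side i)) atTop (𝓝 0) :=
  Metric.tendsto_atTop.2 fun ε hε =>
    let ⟨N, hN⟩ := h.2 ε hε
    ⟨N, fun n hn => by simpa [abs_of_nonneg hausdorffDist_nonneg] using hN n hn i⟩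

theorem tendsto_infDist_side (h : ConvergesFromInside Qn Q) {i : Fin 4} {w : ℂ}
    (hw : w ∈ Q.side i) : Tendsto (fun n => infDist w ((Qn n).side i)) atTop (𝓝 0) :=
  squeeze_zero (fun _ => infDist_nonneg)
    (fun n => hausdorffDist_comm (s := (Qn n).side i) ▸
      infDist_le_hausdorffDist_of_mem hw (Q.hausdorffEDist_side_ne_top _ i))
    (h.tendsto_hausdorffDist i)

theorem mem_side_of_tendsto (h : ConvergesFromInside Qn Q) {l : Filter ℕ} [l.NeBot]
    (hl : l ≤ atTop) {i : Fin 4} {x : ℕ → ℂ} {a : ℂ} (hx : Tendsto x l (𝓝 a))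
    (hxi : ∀ᶠ n in l, x n ∈ (Qn n).side i) : a ∈ Q.side i := by
  rw [(Q.isCompact_side i).isClosed.mem_iff_infDist_zero (Q.side_nonempty i)]
  refine le_antisymm (le_of_tendsto_of_tendsto ((continuous_infDist_pt _).tendsto a |>.comp hx)
    ((h.tendsto_hausdorffDist i).mono_left hl) ?_) infDist_nonneg
  filter_upwards [hxi] with n hn
  exact infDist_le_hausdorffDist_of_mem hn ((Qn n).hausdorffEDist_side_ne_top Q i)

theorem ball_subset_of_tendsto (h : ConvergesFromInside Qn Q) {l : Filter ℕ} [l.NeBot]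
    (hl : l ≤ atTop) {c : ℕ → ℂ} {r : ℕ → ℝ} {c₀ : ℂ} {r₀ : ℝ} (hc : Tendsto c l (𝓝 c₀))
    (hr : Tendsto r l (𝓝 r₀)) (hball : ∀ n, ball (c n) (r n) ⊆ (Qn n).Q) :
    ball c₀ r₀ ⊆ Q.Q := by
  intro w hw
  obtain ⟨δ, hδ, hδr⟩ : ∃ δ > 0, δ + dist w c₀ < r₀ :=
    ⟨(r₀ - dist w c₀) / 2, by linarith [mem_ball.1 hw], by linarith [mem_ball.1 hw]⟩
  have hnear : ∀ᶠ n in l, ball w δ ⊆ (Qn n).Q := by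
    have hlim : Tendsto (fun n => δ + dist w (c n) - r n) l (𝓝 (δ + dist w c₀ - r₀)) :=
      ((tendsto_const_nhds.dist hc).const_add δ).sub hr
    filter_upwards [hlim.eventually_lt_const (show δ + dist w c₀ - r₀ < 0 by linarith)] with n hn
    exact (ball_subset_ball' (by linarith)).trans (hball n)
  have hclosure : w ∈ closure Q.Q :=
    let ⟨n, hn⟩ := hnear.exists
    h.1 n (subset_closure (hn (mem_ball_self hδ)))
  have hfrontier : w ∉ frontier Q.Q := fun hwf => by
    obtain ⟨i, hi⟩ := mem_iUnion.1 (Q.frontier_subset_iUnion_side hwf)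
    obtain ⟨n, hn, hdist⟩ :=
      (hnear.and (((h.tendsto_infDist_side hi).mono_left hl).eventually_lt_const hδ)).exists
    exact ((Qn n).le_infDist_side_of_ball_subset hn i).not_gt hdist
  rw [← Q.isOpen.interior_eq, ← closure_sdiff_frontier]
  exact ⟨hclosure, hfrontier⟩

theorem sphere_inter_side_nonempty_of_tendsto (h : ConvergesFromInside Qn Q)
    {F : Ultrafilter ℕ} (hF : (F : Filter ℕ) ≤ atTop) {c : ℕ → ℂ} {r : ℕ → ℝ} {c₀ : ℂ} {r₀ : ℝ}
    (hc : Tendsto c (F : Filter ℕ) (𝓝 c₀)) (hr : Tendsto r (F : Filter ℕ) (𝓝 r₀)) {i : Fin 4}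
    (hne : ∀ᶠ n in (F : Filter ℕ), (sphere (c n) (r n) ∩ (Qn n).side i).Nonempty) :
    (sphere c₀ r₀ ∩ Q.side i).Nonempty := by
  obtain ⟨x, hx⟩ := Filter.skolem.1 hne
  obtain ⟨x₀, -, hx₀⟩ := Q.isBounded.isCompact_closure.exists_tendsto_of_ultrafilter
    (hx.mono fun n hn => h.side_subset_closure n i hn.2)
  have hdist : Tendsto (fun n => dist (x n) (c n)) (F : Filter ℕ) (𝓝 r₀) :=
    hr.congr' (hx.mono fun n hn => (mem_sphere.1 hn.1).symm)
  exact ⟨x₀, mem_sphere.2 (tendsto_nhds_unique (hx₀.dist hc) hdist),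
    h.mem_side_of_tendsto hF hx₀ (hx.mono fun n hn => hn.2)⟩

theorem touchesThreeSides_of_tendsto (h : ConvergesFromInside Qn Q) {F : Ultrafilter ℕ}
    (hF : (F : Filter ℕ) ≤ atTop) {c : ℕ → ℂ} {r : ℕ → ℝ} {c₀ : ℂ} {r₀ : ℝ}
    (hc : Tendsto c (F : Filter ℕ) (𝓝 c₀)) (hr : Tendsto r (F : Filter ℕ) (𝓝 r₀))
    (htouch : ∀ n, (Qn n).TouchesThreeSides (c n) (r n)) :
    Q.TouchesThreeSides c₀ r₀ := by
  choose i j k hij hik hjk hi hj hk using htouch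
  obtain ⟨⟨i₀, j₀, k₀⟩, hconst⟩ := F.exists_eventually_eq_of_finite fun n => (i n, j n, k n)
  simp only [Prod.mk.injEq] at hconst
  obtain ⟨n, rfl, rfl, rfl⟩ := hconst.exists
  refine ⟨i n, j n, k n, hij n, hik n, hjk n, ?_, ?_, ?_⟩ <;>
    refine h.sphere_inter_side_nonempty_of_tendsto hF hc hr ?_
  · filter_upwards [hconst] with m hm using hm.1 ▸ hi m
  · filter_upwards [hconst] with m hm using hm.2.1 ▸ hj m
  · filter_upwards [hconst] with m hm using hm.2.2 ▸ hk m

end ConvergesFromInside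

theorem limit_disk_general (Q : JordanQuadrilateral) (Qn : ℕ → JordanQuadrilateral)
    (hconv : ConvergesFromInside Qn Q)
    (hdisks : ∀ n, ∃ c ∈ (Qn n).Q, ∃ r > (0 : ℝ),
      Metric.ball c r ⊆ (Qn n).Q ∧ (Qn n).TouchesThreeSides c r) :
    ∃ c ∈ Q.Q, ∃ r > (0 : ℝ), Metric.ball c r ⊆ Q.Q ∧ Q.TouchesThreeSides c r := by
  choose c hc r hr hball htouch using hdisks
  set F := Ultrafilter.of (atTop : Filter ℕ)
  have hK : IsCompact (closure Q.Q) := Q.isBounded.isCompact_closure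
  have hr_mem : ∀ n, r n ∈ Icc 0 (diam (closure Q.Q)) := fun n => by
    obtain ⟨i, -, -, -, -, -, ⟨x, hx, hxi⟩, -⟩ := htouch n
    exact ⟨(hr n).le, mem_sphere.1 hx ▸ dist_le_diam_of_mem hK.isBounded
      (hconv.side_subset_closure n i hxi) (hconv.1 n (subset_closure (hc n)))⟩
  obtain ⟨c₀, -, hc₀⟩ := hK.exists_tendsto_of_ultrafilter (F := F)
    (.of_forall fun n => hconv.1 n (subset_closure (hc n)))
  obtain ⟨r₀, -, hr₀⟩ := isCompact_Icc.exists_tendsto_of_ultrafilter (F := F) (.of_forall hr_mem)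
  have htouch₀ := hconv.touchesThreeSides_of_tendsto (Ultrafilter.of_le _) hc₀ hr₀ htouch
  have hball₀ := hconv.ball_subset_of_tendsto (Ultrafilter.of_le _) hc₀ hr₀ hball
  exact ⟨c₀, hball₀ (mem_ball_self htouch₀.radius_pos), r₀, htouch₀.radius_pos, hball₀, htouch₀⟩

/-- If an increasing sequence of Jordan quadrilaterals converging to `Q` from inside each
contains a disk whose boundary circle meets three distinct sides, then so does `Q`. -/
theorem limit_disk (Q : JordanQuadrilateral) (Qn : ℕ → JordanQuadrilateral)
    (hmono : ∀ n, (Qn n).Q ⊆ (Qn (n + 1)).Q)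
    (hconv : ConvergesFromInside Qn Q)
    (hdisks : ∀ n, ∃ c ∈ (Qn n).Q, ∃ r > (0 : ℝ),
      Metric.ball c r ⊆ (Qn n).Q ∧ (Qn n).TouchesThreeSides c r) :
    ∃ c ∈ Q.Q, ∃ r > (0 : ℝ), Metric.ball c r ⊆ Q.Q ∧ Q.TouchesThreeSides c r :=
  limit_disk_general Q Qn hconv hdisks
end
end

section
/- Let Q be a Jordan quadrilateral, c ∈ Q and r > 0 with the open disk D(c,r) contained in Q. If the circle {z : |z − c| = r} contains a point of the side a₁ and a point of the side a₂, then 2r ≥ s_a(Q); in particular, diam(Q) ≥ s_a(Q). -/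
open Set Metric MeasureTheory Filter
open scoped ENNReal NNReal Topology

noncomputable section

/-! The two radii joining the points where the circle meets `a₁` and `a₂` to the centre form a
path of length at most `2r` whose interior lies in the open disk, hence in `Q`, so it competes in
the infimum defining `s_a(Q)`. The disk itself has diameter `2r`. -/

open AffineMap

section BrokenLine

variable {E : Type*} [NormedAddCommGroup E] [NormedSpace ℝ E]

def brokenLine (x c y : E) (t : ℝ) : E :=
  if t ≤ 1 / 2 then lineMap x c (2 * t) else lineMap c y (2 * t - 1)

variable (x c y : E)

@[simp] lemma brokenLine_zero : brokenLine x c y 0 = x := by simp [brokenLine]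

@[simp] lemma brokenLine_one : brokenLine x c y 1 = y := by norm_num [brokenLine]

lemma continuous_brokenLine : Continuous (brokenLine x c y) :=
  Continuous.if_le (by fun_prop) (by fun_prop) continuous_id continuous_const
    fun t ht => by simp [ht]

lemma eVariationOn_lineMap_comp_le {p q : E} {φ : ℝ → ℝ} {s : Set ℝ} (hφ : MonotoneOn φ s)
    (hφs : MapsTo φ s (Icc 0 1)) : eVariationOn (lineMap p q ∘ φ) s ≤ edist p q := by
  calc eVariationOn (lineMap p q ∘ φ) s
      = eVariationOn (lineMap p q ∘ id) (φ '' s) := eVariationOn.comp_eq_of_monotoneOn _ _ hφ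
    _ ≤ eVariationOn (lineMap p q ∘ id) (Icc 0 1) := eVariationOn.mono _ hφs.image_subset
    _ ≤ nndist p q * eVariationOn id (Icc (0 : ℝ) 1) :=
        (lipschitzWith_lineMap p q).lipschitzOnWith.comp_eVariationOn_le (mapsTo_id _)
    _ = edist p q := by simp

lemma eVariationOn_brokenLine_le :
    eVariationOn (brokenLine x c y) (Icc 0 1) ≤ edist x c + edist c y := by
  have hsplit := eVariationOn.Icc_add_Icc (brokenLine x c y) (s := univ)
    (by norm_num : (0 : ℝ) ≤ 1 / 2) (by norm_num : (1 / 2 : ℝ) ≤ 1) (mem_univ _)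
  simp only [univ_inter] at hsplit
  rw [← hsplit]
  gcongr
  · have : EqOn (brokenLine x c y) (lineMap x c ∘ (2 * ·)) (Icc 0 (1 / 2)) :=
      fun t ht => if_pos ht.2
    rw [eVariationOn.eq_of_eqOn this]
    exact eVariationOn_lineMap_comp_le (fun _ _ _ _ h => by linarith)
      fun t ht => ⟨by linarith [ht.1], by linarith [ht.2]⟩
  · have : EqOn (brokenLine x c y) (lineMap c y ∘ (2 * · - 1)) (Icc (1 / 2) 1) := by
      intro t ht
      rcases ht.1.eq_or_lt with rfl | h
      · norm_num [brokenLine]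
      · exact if_neg h.not_ge
    rw [eVariationOn.eq_of_eqOn this]
    exact eVariationOn_lineMap_comp_le (fun _ _ _ _ h => by linarith)
      fun t ht => ⟨by linarith [ht.1], by linarith [ht.2]⟩

lemma brokenLine_mem_ball {r : ℝ} (hr : 0 < r) (hx : x ∈ closedBall c r)
    (hy : y ∈ closedBall c r) {t : ℝ} (ht : t ∈ Ioo 0 1) : brokenLine x c y t ∈ ball c r := by
  rw [mem_closedBall] at hx hy
  rw [mem_ball, brokenLine]
  split_ifs with h
  · rw [dist_lineMap_right, Real.norm_eq_abs]
    have : |1 - 2 * t| < 1 := abs_lt.2 ⟨by linarith [ht.2], by linarith [ht.1]⟩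
    exact (mul_le_mul_of_nonneg_left hx (abs_nonneg _)).trans_lt
      (mul_lt_of_lt_one_left hr this)
  · rw [dist_lineMap_left, Real.norm_eq_abs, dist_comm c]
    have : |2 * t - 1| < 1 := abs_lt.2 ⟨by linarith [ht.1], by linarith [ht.2]⟩
    exact (mul_le_mul_of_nonneg_left hy (abs_nonneg _)).trans_lt
      (mul_lt_of_lt_one_left hr this)

end BrokenLine

namespace JordanQuadrilateral

variable (Q : JordanQuadrilateral)

lemma a₁_subset_frontier : Q.a₁ ⊆ frontier Q.Q := by
  rw [← Q.γ_image]
  exact image_mono fun t ht =>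
    ⟨Q.ht₁.trans ht.1, ht.2.trans_lt (by linarith [Q.h₂₃, Q.h₃₄, Q.ht₄])⟩

lemma a₂_subset_frontier : Q.a₂ ⊆ frontier Q.Q := by
  rw [← Q.γ_image]
  exact image_mono fun t ht =>
    ⟨by linarith [ht.1, Q.ht₁, Q.h₁₂, Q.h₂₃], ht.2.trans_lt Q.ht₄⟩

lemma sa_le_eVariationOn {g : ℝ → ℂ} (hg : ContinuousOn g (Icc 0 1))
    (hgQ : MapsTo g (Ioo 0 1) Q.Q) (hg0 : g 0 ∈ Q.a₁) (hg1 : g 1 ∈ Q.a₂) :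
    Q.sa ≤ eVariationOn g (Icc 0 1) := by
  have hgQ' : MapsTo g (Icc 0 1) (closure Q.Q) := by
    intro t ht
    rcases ht.1.eq_or_lt with rfl | h0
    · exact frontier_subset_closure (Q.a₁_subset_frontier hg0)
    rcases ht.2.eq_or_lt with rfl | h1
    · exact frontier_subset_closure (Q.a₂_subset_frontier hg1)
    exact subset_closure (hgQ ⟨h0, h1⟩)
  exact iInf₂_le_of_le g hg <| iInf₂_le_of_le hgQ' hgQ <| iInf₂_le hg0 hg1

lemma sa_le_edist_add_edist {x c y : ℂ} {r : ℝ} (hr : 0 < r) (hball : ball c r ⊆ Q.Q)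
    (hx : x ∈ closedBall c r ∩ Q.a₁) (hy : y ∈ closedBall c r ∩ Q.a₂) :
    Q.sa ≤ edist x c + edist c y :=
  (Q.sa_le_eVariationOn (continuous_brokenLine x c y).continuousOn
    (fun _ ht => hball (brokenLine_mem_ball x c y hr hx.1 hy.1 ht))
    (by simpa using hx.2) (by simpa using hy.2)).trans (eVariationOn_brokenLine_le x c y)

end JordanQuadrilateral

lemma ofReal_two_mul_le_ediam_of_ball_subset {E : Type*} [NormedAddCommGroup E]
    [NormedSpace ℝ E] [Nontrivial E] {s : Set E} {c : E} {r : ℝ} (hr : 0 ≤ r) (hs : ball c r ⊆ s) :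
    ENNReal.ofReal (2 * r) ≤ ediam s := by
  rw [← diam_ball_eq c hr, diam, ENNReal.ofReal_toReal isBounded_ball.ediam_ne_top]
  exact ediam_mono hs

theorem two_radius_ge_sa_general (Q : JordanQuadrilateral) (c : ℂ) (r : ℝ)
    (hr : 0 < r) (hball : Metric.ball c r ⊆ Q.Q)
    (h1 : (Metric.sphere c r ∩ Q.a₁).Nonempty)
    (h2 : (Metric.sphere c r ∩ Q.a₂).Nonempty) :
    Q.sa ≤ ENNReal.ofReal (2 * r) ∧ Q.sa ≤ EMetric.diam Q.Q := by
  obtain ⟨x, hxr, hx⟩ := h1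
  obtain ⟨y, hyr, hy⟩ := h2
  have hsa : Q.sa ≤ ENNReal.ofReal (2 * r) := calc
    Q.sa ≤ edist x c + edist c y :=
      Q.sa_le_edist_add_edist hr hball ⟨sphere_subset_closedBall hxr, hx⟩
        ⟨sphere_subset_closedBall hyr, hy⟩
    _ = ENNReal.ofReal (2 * r) := by
      rw [edist_dist, edist_dist, mem_sphere.1 hxr, dist_comm, mem_sphere.1 hyr,
        ← ENNReal.ofReal_add hr.le hr.le, two_mul]
  exact ⟨hsa, hsa.trans (ofReal_two_mul_le_ediam_of_ball_subset hr.le hball)⟩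

/-- If a disk `D(c,r) ⊆ Q` has boundary circle meeting both `a`-sides of `Q`, then
`2r ≥ s_a(Q)`; in particular `diam Q ≥ s_a(Q)`. -/
theorem two_radius_ge_sa (Q : JordanQuadrilateral) (c : ℂ) (r : ℝ)
    (hc : c ∈ Q.Q) (hr : 0 < r) (hball : Metric.ball c r ⊆ Q.Q)
    (h1 : (Metric.sphere c r ∩ Q.a₁).Nonempty)
    (h2 : (Metric.sphere c r ∩ Q.a₂).Nonempty) :
    Q.sa ≤ ENNReal.ofReal (2 * r) ∧ Q.sa ≤ EMetric.diam Q.Q :=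
  two_radius_ge_sa_general Q c r hr hball h1 h2
end
end

section
/- Let a, b > 0 with a ≠ b and let R = (0,a) × (0,b) ⊂ ℂ be the open rectangle, regarded as a Jordan quadrilateral with quad-vertices at its four corners (so that its sides are the four edges of the rectangle). Then for every c ∈ R and r > 0 with the open disk D(c,r) contained in R, the circle {z : |z − c| = r} does not contain points of all four sides of R; that is, the number 3 in the main theorem is sharp. -/
/-!
A disk inside the rectangle `(0,a) × (0,b)` has diameter `2r ≤ a` and `2r ≤ b`. If its boundary
circle meets both horizontal sides, the imaginary parts `0` and `b` lie within `r` of `c.im`, so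
`b ≤ 2r`; likewise meeting both vertical sides gives `a ≤ 2r`. Hence all four contacts force
`a = 2r = b`.
-/

open Set Metric

namespace Complex

theorem im_eq_of_mem_segment {x y z : ℂ} {v : ℝ} (hz : z ∈ segment ℝ x y)
    (hx : x.im = v) (hy : y.im = v) : z.im = v :=
  (convex_hyperplane imLm.isLinear v).segment_subset hx hy hz

theorem re_eq_of_mem_segment {x y z : ℂ} {v : ℝ} (hz : z ∈ segment ℝ x y)
    (hx : x.re = v) (hy : y.re = v) : z.re = v :=
  (convex_hyperplane reLm.isLinear v).segment_subset hx hy hz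

theorem im_mem_closedBall_of_mem_sphere {c z : ℂ} {r : ℝ} (hz : z ∈ sphere c r) :
    z.im ∈ closedBall c.im r := by
  rw [mem_sphere, dist_eq] at hz
  simpa [Real.dist_eq, ← hz] using abs_im_le_norm (z - c)

theorem re_mem_closedBall_of_mem_sphere {c z : ℂ} {r : ℝ} (hz : z ∈ sphere c r) :
    z.re ∈ closedBall c.re r := by
  rw [mem_sphere, dist_eq] at hz
  simpa [Real.dist_eq, ← hz] using abs_re_le_norm (z - c)

theorem ball_im_subset_of_ball_subset_preimage_im {c : ℂ} {r : ℝ} {t : Set ℝ}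
    (h : ball c r ⊆ im ⁻¹' t) : ball c.im r ⊆ t := by
  intro y hy
  have hmem : c + ((y - c.im : ℝ) : ℂ) * I ∈ ball c r := by
    rwa [mem_ball, dist_eq, add_sub_cancel_left, norm_mul, norm_I, mul_one,
      norm_real, Real.norm_eq_abs, ← Real.dist_eq]
  simpa using h hmem

theorem ball_re_subset_of_ball_subset_preimage_re {c : ℂ} {r : ℝ} {s : Set ℝ}
    (h : ball c r ⊆ re ⁻¹' s) : ball c.re r ⊆ s := by
  intro x hx
  have hmem : c + ((x - c.re : ℝ) : ℂ) ∈ ball c r := by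
    rwa [mem_ball, dist_eq, add_sub_cancel_left, norm_real, Real.norm_eq_abs,
      ← Real.dist_eq]
  simpa using h hmem

end Complex

theorem two_mul_eq_of_ball_subset_Ioo {x r L : ℝ} (hr : 0 < r) (hball : ball x r ⊆ Ioo 0 L)
    (h0 : 0 ∈ closedBall x r) (hL : L ∈ closedBall x r) : 2 * r = L := by
  rw [Real.ball_eq_Ioo, Ioo_subset_Ioo_iff (by linarith)] at hball
  rw [Real.closedBall_eq_Icc, mem_Icc] at h0 hL
  linarith [hball.1, hball.2]

theorem rectangle_no_circle_touches_four_sides_general (a b : ℝ)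
    (hab : a ≠ b) (R : Set ℂ)
    (hR : R = {z : ℂ | z.re ∈ Set.Ioo 0 a ∧ z.im ∈ Set.Ioo 0 b})
    (c : ℂ) (r : ℝ) (hr : 0 < r) (hball : Metric.ball c r ⊆ R) :
    ¬ ((Metric.sphere c r ∩ segment ℝ (0 : ℂ) (a : ℂ)).Nonempty ∧
       (Metric.sphere c r ∩ segment ℝ (a : ℂ) (a + b * Complex.I)).Nonempty ∧
       (Metric.sphere c r ∩ segment ℝ (a + b * Complex.I) (b * Complex.I)).Nonempty ∧
       (Metric.sphere c r ∩ segment ℝ (b * Complex.I) (0 : ℂ)).Nonempty) := by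
  subst hR
  rintro ⟨⟨z₁, hz₁, hs₁⟩, ⟨z₂, hz₂, hs₂⟩, ⟨z₃, hz₃, hs₃⟩, ⟨z₄, hz₄, hs₄⟩⟩
  have hz₁im : z₁.im = 0 := Complex.im_eq_of_mem_segment hs₁ (by simp) (by simp)
  have hz₂re : z₂.re = a := Complex.re_eq_of_mem_segment hs₂ (by simp) (by simp)
  have hz₃im : z₃.im = b := Complex.im_eq_of_mem_segment hs₃ (by simp) (by simp)
  have hz₄re : z₄.re = 0 := Complex.re_eq_of_mem_segment hs₄ (by simp) (by simp)
  have ha : 2 * r = a :=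
    two_mul_eq_of_ball_subset_Ioo hr
      (Complex.ball_re_subset_of_ball_subset_preimage_re fun _ hz => (hball hz).1)
      (hz₄re ▸ Complex.re_mem_closedBall_of_mem_sphere hz₄)
      (hz₂re ▸ Complex.re_mem_closedBall_of_mem_sphere hz₂)
  have hb : 2 * r = b :=
    two_mul_eq_of_ball_subset_Ioo hr
      (Complex.ball_im_subset_of_ball_subset_preimage_im fun _ hz => (hball hz).2)
      (hz₁im ▸ Complex.im_mem_closedBall_of_mem_sphere hz₁)
      (hz₃im ▸ Complex.im_mem_closedBall_of_mem_sphere hz₃)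
  exact hab (ha.symm.trans hb)

/-- In an open rectangle `(0,a) × (0,b)` (a Jordan quadrilateral whose four sides are the
four edges), no circle bounding a disk contained in the rectangle can meet all four sides:
the number three in the main theorem is sharp. -/
theorem rectangle_no_circle_touches_four_sides (a b : ℝ) (ha : 0 < a) (hb : 0 < b)
    (hab : a ≠ b) (R : Set ℂ)
    (hR : R = {z : ℂ | z.re ∈ Set.Ioo 0 a ∧ z.im ∈ Set.Ioo 0 b})
    (c : ℂ) (r : ℝ) (hr : 0 < r) (hball : Metric.ball c r ⊆ R) :
    ¬ ((Metric.sphere c r ∩ segment ℝ (0 : ℂ) (a : ℂ)).Nonempty ∧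
       (Metric.sphere c r ∩ segment ℝ (a : ℂ) (a + b * Complex.I)).Nonempty ∧
       (Metric.sphere c r ∩ segment ℝ (a + b * Complex.I) (b * Complex.I)).Nonempty ∧
       (Metric.sphere c r ∩ segment ℝ (b * Complex.I) (0 : ℂ)).Nonempty) :=
  rectangle_no_circle_touches_four_sides_general a b hab R hR c r hr hball
end

section
/- Let Q ⊂ ℂ be a bounded, open, connected, simply connected set whose frontier ∂Q is the image of an injective continuous map of the unit circle and is a finite union of nontrivial line segments, and let v ∈ ∂Q be a point such that for some r > 0 the set D(v,r) ∩ Q equals D(v,r) ∩ S, where S is an open sector with vertex v of opening angle π/2 (i.e., exactly two boundary segments meet at v at interior angle π/2). Then v is a limit point of the medial axis MA(Q); that is, v ∈ closure(MA(Q)). -/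
open Set Metric MeasureTheory Filter
open scoped ENNReal NNReal Topology

noncomputable section

/-!
After a rigid motion taking `v` to `0` and the sector to the open first quadrant, the frontier
of `Q` near `0` is the frontier of the quadrant. The point `t(1 + i)` is then at distance `t`
from the two sides, attained at `t` and at `ti`, and when `3t ≤ r` no frontier point is closer:
those outside the ball of radius `r` are at distance at least `r - 2t`. So `t(1 + i)` lies on the
medial axis, and it tends to `0` as `t → 0⁺`.
-/

open Complex

lemma inter_frontier_eq_of_inter_eq {X : Type*} [TopologicalSpace X] {s t U : Set X}
    (hU : IsOpen U) (h : U ∩ s = U ∩ t) : U ∩ frontier s = U ∩ frontier t := by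
  rw [inter_comm U s, inter_comm U t] at h
  rw [inter_comm U, inter_comm U, ← frontier_inter_open_inter hU, h,
    frontier_inter_open_inter hU]

lemma mem_medialAxis_of_forall_le_dist {Ω : Set ℂ} {z w w' : ℂ} {d : ℝ} (hz : z ∈ Ω)
    (hw : w ∈ frontier Ω) (hw' : w' ∈ frontier Ω) (hne : w ≠ w') (hdw : dist z w = d)
    (hdw' : dist z w' = d) (hd : ∀ p ∈ frontier Ω, d ≤ dist z p) : z ∈ medialAxis Ω := by
  have hinf : infDist z (frontier Ω) = d :=
    le_antisymm (hdw ▸ infDist_le_dist_of_mem hw) ((le_infDist ⟨w, hw⟩).2 hd)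
  exact ⟨hz, w, hw, w', hw', hne, hdw.trans hinf.symm, hdw'.trans hinf.symm⟩

lemma image_medialAxis_subset (e : ℂ ≃ᵢ ℂ) (Ω : Set ℂ) :
    e '' medialAxis Ω ⊆ medialAxis (e '' Ω) := by
  rintro _ ⟨z, ⟨hz, w, hw, w', hw', hne, hdw, hdw'⟩, rfl⟩
  have hfr : frontier (e '' Ω) = e '' frontier Ω := (e.toHomeomorph.image_frontier Ω).symm
  have hinf : infDist (e z) (frontier (e '' Ω)) = infDist z (frontier Ω) := by
    rw [hfr, infDist_image e.isometry]
  refine ⟨mem_image_of_mem e hz, e w, hfr ▸ mem_image_of_mem e hw, e w',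
    hfr ▸ mem_image_of_mem e hw', e.injective.ne hne, ?_, ?_⟩ <;>
    rw [hinf, e.dist_eq]
  exacts [hdw, hdw']

def quadrant : Set ℂ := Ioi 0 ×ℂ Ioi 0

lemma frontier_quadrant : frontier quadrant = Ici 0 ×ℂ {0} ∪ {0} ×ℂ Ici 0 := by
  simp [quadrant, frontier_reProdIm]

lemma le_dist_of_mem_frontier_quadrant {t : ℝ} (ht : 0 ≤ t) {q : ℂ}
    (hq : q ∈ frontier quadrant) : t ≤ dist (t * (1 + I)) q := by
  rw [frontier_quadrant] at hq
  rw [dist_eq_norm]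
  rcases hq with ⟨-, hq⟩ | ⟨hq, -⟩
  · calc t = |(t * (1 + I) - q).im| := by simp_all [abs_of_nonneg ht]
      _ ≤ _ := abs_im_le_norm _
  · calc t = |(t * (1 + I) - q).re| := by simp_all [abs_of_nonneg ht]
      _ ≤ _ := abs_re_le_norm _

lemma norm_ofReal_mul_one_add_I_le {t : ℝ} (ht : 0 ≤ t) : ‖(t * (1 + I) : ℂ)‖ ≤ 2 * t :=
  calc ‖(t * (1 + I) : ℂ)‖ ≤ t * (‖(1 : ℂ)‖ + ‖I‖) := by
        rw [norm_mul, norm_real, Real.norm_of_nonneg ht]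
        gcongr
        exact norm_add_le _ _
    _ = 2 * t := by simp; ring

lemma diag_mem_medialAxis {Q : Set ℂ} {r t : ℝ} (hQ : ball 0 r ∩ Q = ball 0 r ∩ quadrant)
    (ht : 0 < t) (htr : 3 * t ≤ r) : (t * (1 + I) : ℂ) ∈ medialAxis Q := by
  have hfr := inter_frontier_eq_of_inter_eq isOpen_ball hQ
  have hball : ∀ p : ℂ, ‖p‖ ≤ 2 * t → p ∈ ball 0 r := fun p hp => by
    rw [mem_ball_zero_iff]; linarith
  have hz := norm_ofReal_mul_one_add_I_le ht.le
  have hzQ : (t * (1 + I) : ℂ) ∈ Q := by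
    have : (t * (1 + I) : ℂ) ∈ ball 0 r ∩ quadrant :=
      ⟨hball _ hz, by simp [quadrant, mem_reProdIm, ht]⟩
    exact (hQ ▸ this).2
  have hfrQ {p : ℂ} (hp : ‖p‖ ≤ 2 * t) (hq : p ∈ frontier quadrant) : p ∈ frontier Q :=
    (hfr.symm ▸ ⟨hball p hp, hq⟩ : p ∈ ball 0 r ∩ frontier Q).2
  have hw : (t : ℂ) ∈ frontier Q :=
    hfrQ (by simp [abs_of_pos ht]; linarith) (by simp [frontier_quadrant, mem_reProdIm, ht.le])
  have hw' : (t * I : ℂ) ∈ frontier Q :=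
    hfrQ (by simp [abs_of_pos ht]; linarith) (by simp [frontier_quadrant, mem_reProdIm, ht.le])
  refine mem_medialAxis_of_forall_le_dist (d := t) hzQ hw hw' ?_ ?_ ?_ ?_
  · intro h
    simpa [ht.ne'] using (congrArg im h).symm
  · simp [dist_eq_norm, mul_add, abs_of_pos ht]
  · simp [dist_eq_norm, mul_add, abs_of_pos ht]
  · intro p hp
    by_cases hpr : p ∈ ball 0 r
    · exact le_dist_of_mem_frontier_quadrant ht.le
        (hfr ▸ ⟨hpr, hp⟩ : p ∈ ball 0 r ∩ frontier quadrant).2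
    · rw [mem_ball_zero_iff, not_lt] at hpr
      rw [dist_comm, dist_eq_norm]
      linarith [norm_sub_norm_le p (t * (1 + I))]

lemma zero_mem_closure_medialAxis {Q : Set ℂ} {r : ℝ}
    (hQ : ball 0 r ∩ Q = ball 0 r ∩ quadrant) (hr : 0 < r) :
    (0 : ℂ) ∈ closure (medialAxis Q) := by
  have hlim : Tendsto (fun t : ℝ => (t * (1 + I) : ℂ)) (𝓝[>] 0) (𝓝 0) := by
    have hc : Continuous fun t : ℝ => (t * (1 + I) : ℂ) := by fun_prop
    simpa using (hc.tendsto 0).mono_left nhdsWithin_le_nhds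
  refine mem_closure_of_tendsto hlim ?_
  filter_upwards [Ioc_mem_nhdsGT (show (0 : ℝ) < r / 3 by positivity)] with t ht
  exact diag_mem_medialAxis hQ ht.1 (by linarith [ht.2])

def rigidMotion (v u : ℂ) (hu : ‖u‖ = 1) : ℂ ≃ᵢ ℂ :=
  (rotation ⟨u, mem_sphere_zero_iff_norm.2 hu⟩).toIsometryEquiv.trans (IsometryEquiv.addLeft v)

@[simp] lemma rigidMotion_apply (v u : ℂ) (hu : ‖u‖ = 1) (p : ℂ) :
    rigidMotion v u hu p = v + u * p := rfl

lemma rigidMotion_image_quadrant (v u : ℂ) (hu : ‖u‖ = 1) :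
    rigidMotion v u hu '' quadrant =
      {z : ℂ | ∃ s t : ℝ, 0 < s ∧ 0 < t ∧ z = v + s • u + t • (I * u)} := by
  ext z
  simp only [mem_image, quadrant, mem_reProdIm, rigidMotion_apply, mem_Ioi]
  constructor
  · rintro ⟨p, ⟨hre, him⟩, rfl⟩
    refine ⟨p.re, p.im, hre, him, ?_⟩
    conv_lhs => rw [← re_add_im p]
    simp only [real_smul]
    ring
  · rintro ⟨s, t, hs, ht, rfl⟩
    exact ⟨s + t * I, by simpa using ⟨hs, ht⟩, by simp only [real_smul]; ring⟩

theorem corner_is_limit_of_medialAxis_general (Q : Set ℂ)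
    (v : ℂ) (u : ℂ) (hu : ‖u‖ = 1) (r : ℝ) (hr : 0 < r)
    (hsector : Metric.ball v r ∩ Q =
      Metric.ball v r ∩
        {z : ℂ | ∃ s t : ℝ, 0 < s ∧ 0 < t ∧ z = v + s • u + t • (Complex.I * u)}) :
    v ∈ closure (medialAxis Q) := by
  set e := rigidMotion v u hu
  have he0 : e 0 = v := by simp [e]
  have hQ : ball 0 r ∩ e ⁻¹' Q = ball 0 r ∩ quadrant := by
    have hball : e ⁻¹' ball v r = ball 0 r := by
      rw [← he0, e.preimage_ball, e.symm_apply_apply]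
    rw [← hball, ← preimage_inter, hsector, ← rigidMotion_image_quadrant v u hu,
      preimage_inter, e.injective.preimage_image]
  have hMA : e '' medialAxis (e ⁻¹' Q) ⊆ medialAxis Q := by
    simpa only [e.surjective.image_preimage] using image_medialAxis_subset e (e ⁻¹' Q)
  rw [← he0]
  exact closure_mono hMA <| image_closure_subset_closure_image e.continuous
    (mem_image_of_mem e (zero_mem_closure_medialAxis hQ hr))

/-- If the boundary of a polygonal Jordan domain has a corner of interior angle `π/2` at `v`
(near `v` the domain coincides with an open quarter-plane sector with vertex `v`), then `v` is
a limit point of the medial axis. -/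
theorem corner_is_limit_of_medialAxis (Q : Set ℂ) (hopen : IsOpen Q)
    (hbounded : Bornology.IsBounded Q) (hconn : IsConnected Q)
    (hsimply : SimplyConnectedSpace Q)
    (γ : ℝ → ℂ) (hγc : Continuous γ) (hγp : Function.Periodic γ 1)
    (hγi : Set.InjOn γ (Set.Ico 0 1)) (hγim : γ '' Set.Ico 0 1 = frontier Q)
    (hpoly : IsPolygonalBoundary Q)
    (v : ℂ) (hv : v ∈ frontier Q) (u : ℂ) (hu : ‖u‖ = 1) (r : ℝ) (hr : 0 < r)
    (hsector : Metric.ball v r ∩ Q =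
      Metric.ball v r ∩
        {z : ℂ | ∃ s t : ℝ, 0 < s ∧ 0 < t ∧ z = v + s • u + t • (Complex.I * u)}) :
    v ∈ closure (medialAxis Q) :=
  corner_is_limit_of_medialAxis_general Q v u hu r hr hsector
end
end
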